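/- If G is a gold sequence of actions, i.e., every correct match and every correct non-match either lies in the verification set Q(G) or can be inferred from Q(G) by transitivity, and every element of Q(G) is correct, then the partition of V whose clusters are the equivalence classes of the relation 'matched via Q(G)' equals the gold partition 𝒱*. -/
import Mathlib


/-- Two strings match under partition `P` if they lie in a common cluster. -/
def SameCluster {V : Type*} (P : Set (Set V)) (v w : V) : Prop :=
  ∃ c ∈ P, v ∈ c ∧ w ∈ c

/-- If `G` is a gold sequence of actions — every correct match and non-match lies
in the verification set (matches `Qm`, non-matches `Qn`) or can be inferred from
it by transitivity — and every element of the verification set is correct, then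
the partition whose clusters are the equivalence classes of the relation
"matched via `Q(G)`" equals the gold partition. -/
theorem gold_sequence_yields_gold_partition {V : Type*} [Fintype V]
    (Pstar : Set (Set V)) (hP : Setoid.IsPartition Pstar)
    (Qm Qn : Set (Sym2 V))
    -- every element of Q(G) is correct
    (hm : ∀ v w : V, s(v, w) ∈ Qm → SameCluster Pstar v w)
    (hn : ∀ v w : V, s(v, w) ∈ Qn → ¬ SameCluster Pstar v w)
    -- every correct match is in Q(G) or inferable from it by transitivity
    (hgoldm : ∀ v w : V, v ≠ w → SameCluster Pstar v w →
      s(v, w) ∈ Qm ∨ Relation.TransGen (fun a b => s(a, b) ∈ Qm) v w)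
    -- every correct non-match is in Q(G) or inferable from it
    (hgoldn : ∀ v w : V, ¬ SameCluster Pstar v w →
      s(v, w) ∈ Qn ∨ ∃ a b : V,
        Relation.ReflTransGen (fun x y => s(x, y) ∈ Qm) v a ∧
        s(a, b) ∈ Qn ∧
        Relation.ReflTransGen (fun x y => s(x, y) ∈ Qm) b w) :
    {S : Set V | ∃ v : V,
        S = {w | Relation.ReflTransGen (fun a b => s(a, b) ∈ Qm) v w}}
      = Pstar := by
  have same_trans : ∀ {a b c : V}, SameCluster Pstar a b → SameCluster Pstar b c →
      SameCluster Pstar a c := by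
    rintro a b c ⟨s, hs, has, hbs⟩ ⟨t, ht, hbt, hct⟩
    obtain ⟨u, hu, hun⟩ := hP.2 b
    have hst : s = t := by rw [hun s ⟨hs, hbs⟩, hun t ⟨ht, hbt⟩]
    exact ⟨s, hs, has, hst ▸ hct⟩
  have same_refl : ∀ a : V, SameCluster Pstar a a := fun a => by
    obtain ⟨u, ⟨hu, hau⟩, _⟩ := hP.2 a
    exact ⟨u, hu, hau, hau⟩
  have key : ∀ v w : V,
      Relation.ReflTransGen (fun a b => s(a, b) ∈ Qm) v w ↔ SameCluster Pstar v w := by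
    intro v w
    constructor
    · intro h
      induction h with
      | refl => exact same_refl v
      | tail _ hstep ih => exact same_trans ih (hm _ _ hstep)
    · intro h
      by_cases hvw : v = w
      · subst hvw; exact .refl
      · rcases hgoldm v w hvw h with h1 | h1
        · exact Relation.ReflTransGen.single h1
        · exact h1.to_reflTransGen
  ext S
  simp only [Set.mem_setOf_eq]
  constructor
  · rintro ⟨v, rfl⟩
    obtain ⟨c, ⟨hc, hvc⟩, hun⟩ := hP.2 v
    have : {w | Relation.ReflTransGen (fun a b => s(a, b) ∈ Qm) v w} = c := by
      ext w
      rw [Set.mem_setOf_eq, key]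
      constructor
      · rintro ⟨t, ht, hvt, hwt⟩
        rwa [hun t ⟨ht, hvt⟩] at hwt
      · intro hw; exact ⟨c, hc, hvc, hw⟩
    rw [this]; exact hc
  · intro hS
    have hne : S ≠ ∅ := fun h => hP.1 (h ▸ hS)
    obtain ⟨v, hv⟩ := Set.nonempty_iff_ne_empty.mpr hne
    refine ⟨v, ?_⟩
    ext w
    rw [Set.mem_setOf_eq, key]
    constructor
    · intro hw; exact ⟨S, hS, hv, hw⟩
    · rintro ⟨t, ht, hvt, hwt⟩
      obtain ⟨c, _, hun⟩ := hP.2 v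
      rwa [hun t ⟨ht, hvt⟩, ← hun S ⟨hS, hv⟩] at hwt
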